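/- Let 𝒜 be a finite nonempty set, let S = [0,1], and let v : 𝒜 × S → ℝ≥0 be such that for every a ∈ 𝒜 the map s ↦ v(a; s) is continuous and nondecreasing. Let D = {(v(a; s))_{a∈𝒜} : s ∈ S} ⊆ ℝ^𝒜 be the induced value curve. Then the closure of D is convex if and only if v is decomposable, i.e., there exist a nondecreasing function v̂ : S → ℝ≥0 and functions h : 𝒜 → ℝ≥0, g : 𝒜 → ℝ such that v(a; s) = v̂(s)·h(a) + g(a) for all a ∈ 𝒜 and s ∈ S. -/

import Mathlib

/-!
If the closure of the curve is convex then, the curve being compact, it contains the segment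
between its endpoints `v(·; 0)` and `v(·; 1)`. Every point of that segment lies on the curve,
and the points of a monotone curve are all comparable with each other, so the segment, being
connected, cannot jump over any point `v(·; s)` of the curve: the whole curve lies on the
segment, which is a decomposition with `h = v(·; 1) - v(·; 0)` and `g = v(·; 0)`.
Conversely, a decomposition exhibits the curve as an affine image of `v̂([0,1])`, an interval
because `v̂` is continuous as soon as some `h a ≠ 0` (and a point otherwise).
-/

theorem IsPreconnected.mem_of_forall_le_or_le {X : Type*} [TopologicalSpace X] [PartialOrder X]
    [ClosedIicTopology X] [ClosedIciTopology X] {C : Set X} {z : X}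
    (hC : IsPreconnected C) (hcomp : ∀ x ∈ C, x ≤ z ∨ z ≤ x)
    (hle : ∃ x ∈ C, x ≤ z) (hge : ∃ x ∈ C, z ≤ x) :
    z ∈ C := by
  obtain ⟨x, hxC, hxz, hzx⟩ := isPreconnected_closed_iff.1 hC (Set.Iic z) (Set.Ici z)
    isClosed_Iic isClosed_Ici hcomp hle hge
  rwa [le_antisymm hxz hzx] at hxC

theorem MonotoneOn.mem_segment_of_segment_subset_image {α E : Type*} [LinearOrder α]
    [AddCommGroup E] [Module ℝ E] [TopologicalSpace E] [IsTopologicalAddGroup E]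
    [ContinuousSMul ℝ E] [PartialOrder E] [ClosedIicTopology E] [ClosedIciTopology E]
    {γ : α → E} {S : Set α} (hγ : MonotoneOn γ S) {a b s : α} (ha : a ∈ S) (hb : b ∈ S)
    (hs : s ∈ S) (has : a ≤ s) (hsb : s ≤ b) (hseg : segment ℝ (γ a) (γ b) ⊆ γ '' S) :
    γ s ∈ segment ℝ (γ a) (γ b) :=
  (convex_segment (γ a) (γ b)).isPreconnected.mem_of_forall_le_or_le
    (fun x hx => by
      obtain ⟨t, ht, rfl⟩ := hseg hx
      exact (le_total t s).imp (hγ ht hs) (hγ hs ht))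
    ⟨γ a, left_mem_segment ℝ _ _, hγ ha hs has⟩ ⟨γ b, right_mem_segment ℝ _ _, hγ hs hb hsb⟩

section ValueCurve

variable {A : Type*} {v : A → ℝ → ℝ}

def valueCurve (v : A → ℝ → ℝ) : Set (A → ℝ) :=
  {x | ∃ s ∈ Set.Icc (0 : ℝ) 1, x = fun a => v a s}

def Decomposable (v : A → ℝ → ℝ) : Prop :=
  ∃ (vh : ℝ → ℝ) (h g : A → ℝ),
    MonotoneOn vh (Set.Icc 0 1) ∧
    (∀ s ∈ Set.Icc (0 : ℝ) 1, 0 ≤ vh s) ∧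
    (∀ a, 0 ≤ h a) ∧
    (∀ a, ∀ s ∈ Set.Icc (0 : ℝ) 1, v a s = vh s * h a + g a)

theorem valueCurve_eq_image (v : A → ℝ → ℝ) :
    valueCurve v = (fun s a => v a s) '' Set.Icc 0 1 := by
  ext x
  simp [valueCurve, eq_comm]

theorem isCompact_valueCurve (hcont : ∀ a, ContinuousOn (v a) (Set.Icc 0 1)) :
    IsCompact (valueCurve v) := by
  rw [valueCurve_eq_image]
  exact isCompact_Icc.image_of_continuousOn (continuousOn_pi.2 hcont)

theorem decomposable_of_forall_mem_segment (hmono : ∀ a, MonotoneOn (v a) (Set.Icc 0 1))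
    (hseg : ∀ s ∈ Set.Icc (0 : ℝ) 1,
      (fun a => v a s) ∈ segment ℝ (fun a => v a 0) (fun a => v a 1)) :
    Decomposable v := by
  have h0 : (0 : ℝ) ∈ Set.Icc (0 : ℝ) 1 := Set.left_mem_Icc.2 zero_le_one
  have h01 : ∀ a, v a 0 ≤ v a 1 := fun a =>
    hmono a h0 (Set.right_mem_Icc.2 zero_le_one) zero_le_one
  have hline : ∀ s ∈ Set.Icc (0 : ℝ) 1,
      ∃ θ : ℝ, ∀ a, v a s = v a 0 + θ * (v a 1 - v a 0) := by
    intro s hs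
    obtain ⟨θ, -, hθ⟩ := (segment_eq_image' ℝ _ _).subset (hseg s hs)
    exact ⟨θ, fun a => (congrFun hθ a).symm⟩
  by_cases hconst : ∀ a, v a 0 = v a 1
  · refine ⟨0, 0, fun a => v a 0, monotoneOn_const, fun _ _ => le_rfl, fun _ => le_rfl,
      fun a s hs => ?_⟩
    obtain ⟨θ, hθ⟩ := hline s hs
    simp [hθ a, hconst a]
  obtain ⟨a₀, ha₀⟩ := not_forall.1 hconst
  have hd : 0 < v a₀ 1 - v a₀ 0 := sub_pos.2 ((h01 a₀).lt_of_ne ha₀)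
  -- `v̂(s)` is the segment parameter of `v(·; s)`, read off the coordinate `a₀`
  refine ⟨fun s => (v a₀ s - v a₀ 0) / (v a₀ 1 - v a₀ 0), fun a => v a 1 - v a 0,
    fun a => v a 0, fun x hx y hy hxy => ?_, fun s hs => ?_, fun a => sub_nonneg.2 (h01 a),
    fun a s hs => ?_⟩
  · exact div_le_div_of_nonneg_right (sub_le_sub_right (hmono a₀ hx hy hxy) _) hd.le
  · exact div_nonneg (sub_nonneg.2 (hmono a₀ h0 hs hs.1)) hd.le
  · obtain ⟨θ, hθ⟩ := hline s hs
    have hvh : (v a₀ s - v a₀ 0) / (v a₀ 1 - v a₀ 0) = θ := by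
      rw [hθ a₀, add_sub_cancel_left, mul_div_cancel_right₀ _ hd.ne']
    dsimp only
    rw [hvh, hθ a]
    ring

theorem decomposable_of_convex_closure_valueCurve
    (hcont : ∀ a, ContinuousOn (v a) (Set.Icc 0 1))
    (hmono : ∀ a, MonotoneOn (v a) (Set.Icc 0 1))
    (hconv : Convex ℝ (closure (valueCurve v))) : Decomposable v := by
  rw [(isCompact_valueCurve hcont).isClosed.closure_eq, valueCurve_eq_image] at hconv
  have h0 : (0 : ℝ) ∈ Set.Icc (0 : ℝ) 1 := Set.left_mem_Icc.2 zero_le_one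
  have h1 : (1 : ℝ) ∈ Set.Icc (0 : ℝ) 1 := Set.right_mem_Icc.2 zero_le_one
  have hcurve : MonotoneOn (fun s a => v a s) (Set.Icc 0 1) :=
    fun x hx y hy hxy a => hmono a hx hy hxy
  exact decomposable_of_forall_mem_segment hmono fun s hs =>
    hcurve.mem_segment_of_segment_subset_image h0 h1 hs hs.1 hs.2
      (hconv.segment_subset (Set.mem_image_of_mem _ h0) (Set.mem_image_of_mem _ h1))

theorem convex_valueCurve_of_eq {vh : ℝ → ℝ} {h g : A → ℝ}
    (hcont : ∀ a, ContinuousOn (v a) (Set.Icc 0 1))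
    (hvg : ∀ a, ∀ s ∈ Set.Icc (0 : ℝ) 1, v a s = vh s * h a + g a) :
    Convex ℝ (valueCurve v) := by
  have hcurve : valueCurve v = AffineMap.lineMap g (g + h) '' (vh '' Set.Icc 0 1) := by
    rw [valueCurve_eq_image, Set.image_image]
    refine Set.image_congr fun s hs => ?_
    ext a
    simp [AffineMap.lineMap_apply_module', hvg a s hs]
  rw [hcurve]
  by_cases hh : h = 0
  · subst hh
    refine Set.Subsingleton.convex ?_
    rintro _ ⟨_, _, rfl⟩ _ ⟨_, _, rfl⟩
    simp
  obtain ⟨a₀, ha₀⟩ := Function.ne_iff.1 hh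
  have hvh : ContinuousOn vh (Set.Icc 0 1) :=
    (((hcont a₀).sub (continuousOn_const (c := g a₀))).div_const (h a₀)).congr fun s hs => by
      show vh s = (v a₀ s - g a₀) / h a₀
      rw [hvg a₀ s hs, add_sub_cancel_right, mul_div_cancel_right₀ _ ha₀]
  exact (convex_iff_ordConnected.2 (isPreconnected_Icc.image _ hvh).ordConnected).affine_image _

end ValueCurve

theorem convex_closure_iff_decomposable_general
    {A : Type*}
    (v : A → ℝ → ℝ)
    (hcont : ∀ a, ContinuousOn (v a) (Set.Icc 0 1))
    (hmono : ∀ a, MonotoneOn (v a) (Set.Icc 0 1)) :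
    Convex ℝ (closure {x : A → ℝ | ∃ s ∈ Set.Icc (0 : ℝ) 1, x = fun a => v a s}) ↔
      ∃ (vh : ℝ → ℝ) (h g : A → ℝ),
        MonotoneOn vh (Set.Icc 0 1) ∧
        (∀ s ∈ Set.Icc (0 : ℝ) 1, 0 ≤ vh s) ∧
        (∀ a, 0 ≤ h a) ∧
        (∀ a, ∀ s ∈ Set.Icc (0 : ℝ) 1, v a s = vh s * h a + g a) :=
  ⟨decomposable_of_convex_closure_valueCurve hcont hmono,
    fun ⟨_, _, _, _, _, _, hvg⟩ => (convex_valueCurve_of_eq hcont hvg).closure⟩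

/-- For a single agent with signal space `S = [0,1]`, a continuous,
nondecreasing, nonnegative valuation `v : 𝒜 × S → ℝ≥0` induces the value curve
`D = {(v(a; s))_{a ∈ 𝒜} : s ∈ S} ⊆ ℝ^𝒜`. The closure of `D` is convex iff `v` is
decomposable, i.e. `v(a; s) = v̂(s)·h(a) + g(a)` with `v̂ : S → ℝ≥0` nondecreasing and
`h : 𝒜 → ℝ≥0`, `g : 𝒜 → ℝ`. -/
theorem convex_closure_iff_decomposable
    {A : Type*} [Fintype A] [Nonempty A]
    (v : A → ℝ → ℝ)
    (hcont : ∀ a, ContinuousOn (v a) (Set.Icc 0 1))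
    (hmono : ∀ a, MonotoneOn (v a) (Set.Icc 0 1))
    (hnn : ∀ a, ∀ s ∈ Set.Icc (0 : ℝ) 1, 0 ≤ v a s) :
    Convex ℝ (closure {x : A → ℝ | ∃ s ∈ Set.Icc (0 : ℝ) 1, x = fun a => v a s}) ↔
      ∃ (vh : ℝ → ℝ) (h g : A → ℝ),
        MonotoneOn vh (Set.Icc 0 1) ∧
        (∀ s ∈ Set.Icc (0 : ℝ) 1, 0 ≤ vh s) ∧
        (∀ a, 0 ≤ h a) ∧
        (∀ a, ∀ s ∈ Set.Icc (0 : ℝ) 1, v a s = vh s * h a + g a) :=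
  convex_closure_iff_decomposable_general v hcont hmono
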